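/- Let (X, L) be a random vector with values in ℝ × [0,∞) whose law has density h(x,l) = (1/√(2π))·(|x|+l)·exp(−(|x|+l)²/2) with respect to Lebesgue measure on ℝ × [0,∞). Then the measure μ on ℝ defined by μ(A) = √(π/2)·E[1_A(X/2)·L] is a probability measure, and μ has density y ↦ ∫_{2|y|}^∞ e^{−z²/2} dz with respect to Lebesgue measure. (μ is the law of b(U), the Brownian bridge sampled at an independent uniform time.) -/

import Mathlib

/-!
Write `G t = ∫_t^∞ e^{-z²/2} dz`. Integrating out the local time, `E[L; X ∈ dx]` has density
`∫_0^∞ l h(x,l) dl = G(|x|) / √(2π)`, because `-l e^{-(a+l)²/2} - G(a+l)` is an antiderivative of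
`l (a+l) e^{-(a+l)²/2}`. The substitution `x = 2y` and `√(π/2) · 2 / √(2π) = 1` turn this into the
density `G(2|y|)` of `μ`, whose total mass is `2 ∫_0^∞ G(2y) dy = ∫_0^∞ G = 1`, as
`t G(t) - e^{-t²/2}` is an antiderivative of `G`.
-/

open MeasureTheory ProbabilityTheory Real

/-- The joint density of `(B₁, L₁)`. -/
noncomputable def jointDensity (x l : ℝ) : ℝ :=
  (1 / Real.sqrt (2 * π)) * (|x| + l) * Real.exp (-(|x| + l) ^ 2 / 2)

open Set Filter Topology

lemma tendsto_pow_mul_exp_neg_mul_sq_atTop {b : ℝ} (hb : 0 < b) (n : ℕ) :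
    Tendsto (fun t : ℝ => t ^ n * exp (-b * t ^ 2)) atTop (𝓝 0) := by
  refine ((rpow_mul_exp_neg_mul_sq_isLittleO_exp_neg hb n).tendsto_zero_of_tendsto
    (tendsto_exp_atBot.comp <| tendsto_id.const_mul_atTop_of_neg (by norm_num))).congr fun t => ?_
  rw [rpow_natCast]

lemma hasDerivAt_exp_neg_sq_div_two (z : ℝ) :
    HasDerivAt (fun z : ℝ => exp (-z ^ 2 / 2)) (-z * exp (-z ^ 2 / 2)) z := by
  have h : HasDerivAt (fun z : ℝ => -z ^ 2 / 2) (-z) z :=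
    (((hasDerivAt_pow 2 z).neg).div_const 2).congr_deriv (by simp [neg_div])
  simpa [mul_comm] using h.exp

lemma integrable_exp_neg_sq_div_two : Integrable fun z : ℝ => exp (-z ^ 2 / 2) := by
  simpa [neg_div, div_eq_inv_mul] using integrable_exp_neg_mul_sq (b := 1 / 2) (by norm_num)

lemma tendsto_exp_neg_sq_div_two_atTop : Tendsto (fun t : ℝ => exp (-t ^ 2 / 2)) atTop (𝓝 0) := by
  simpa [neg_div, div_eq_inv_mul] using tendsto_pow_mul_exp_neg_mul_sq_atTop (b := 1 / 2)
    (by norm_num) 0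

lemma tendsto_mul_exp_neg_sq_div_two_atTop :
    Tendsto (fun t : ℝ => t * exp (-t ^ 2 / 2)) atTop (𝓝 0) := by
  simpa [neg_div, div_eq_inv_mul] using tendsto_pow_mul_exp_neg_mul_sq_atTop (b := 1 / 2)
    (by norm_num) 1

noncomputable def gaussianTail (t : ℝ) : ℝ := ∫ z in Ioi t, exp (-z ^ 2 / 2)

lemma gaussianTail_nonneg (t : ℝ) : 0 ≤ gaussianTail t :=
  setIntegral_nonneg measurableSet_Ioi fun _ _ => (exp_pos _).le

lemma hasDerivAt_gaussianTail (t : ℝ) : HasDerivAt gaussianTail (-exp (-t ^ 2 / 2)) t := by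
  have hsplit : gaussianTail = fun s => gaussianTail 0 - ∫ z in (0 : ℝ)..s, exp (-z ^ 2 / 2) := by
    ext s
    rw [eq_sub_iff_add_eq', gaussianTail, gaussianTail]
    exact intervalIntegral.integral_interval_add_Ioi integrable_exp_neg_sq_div_two.integrableOn
      integrable_exp_neg_sq_div_two.integrableOn
  rw [hsplit]
  refine (intervalIntegral.integral_hasDerivAt_right
    integrable_exp_neg_sq_div_two.intervalIntegrable ?_ ?_).const_sub _
  · exact (Continuous.stronglyMeasurable (by fun_prop)).stronglyMeasurableAtFilter
  · exact (by fun_prop : Continuous fun z : ℝ => exp (-z ^ 2 / 2)).continuousAt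

lemma continuous_gaussianTail : Continuous gaussianTail :=
  continuous_iff_continuousAt.2 fun t => (hasDerivAt_gaussianTail t).continuousAt

lemma gaussianTail_le {t : ℝ} (ht : 0 ≤ t) :
    gaussianTail t ≤ 2 * √π * exp (-(1 / 4) * t ^ 2) := by
  have hint : Integrable fun z : ℝ => exp (-(1 / 4) * z ^ 2) :=
    integrable_exp_neg_mul_sq (by norm_num)
  calc gaussianTail t ≤ ∫ z in Ioi t, exp (-(1 / 4) * t ^ 2) * exp (-(1 / 4) * z ^ 2) := by
        refine setIntegral_mono_on integrable_exp_neg_sq_div_two.integrableOn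
          (hint.const_mul _).integrableOn measurableSet_Ioi fun z hz => ?_
        -- `z²/2 ≥ t²/4 + z²/4` once `z ≥ t ≥ 0`
        rw [← exp_add, exp_le_exp]
        nlinarith [mem_Ioi.1 hz]
    _ ≤ exp (-(1 / 4) * t ^ 2) * ∫ z, exp (-(1 / 4) * z ^ 2) := by
        rw [integral_const_mul]
        exact mul_le_mul_of_nonneg_left
          (setIntegral_le_integral hint (.of_forall fun _ => (exp_pos _).le)) (exp_pos _).le
    _ = 2 * √π * exp (-(1 / 4) * t ^ 2) := by
        rw [integral_gaussian, show π / (1 / 4) = 2 ^ 2 * π by ring, sqrt_mul (by norm_num),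
          sqrt_sq (by norm_num)]
        exact mul_comm _ _

lemma tendsto_pow_mul_gaussianTail_atTop (n : ℕ) :
    Tendsto (fun t => t ^ n * gaussianTail t) atTop (𝓝 0) := by
  have hbound : Tendsto (fun t : ℝ => 2 * √π * (t ^ n * exp (-(1 / 4) * t ^ 2))) atTop (𝓝 0) := by
    simpa using (tendsto_pow_mul_exp_neg_mul_sq_atTop (by norm_num) n).const_mul (2 * √π)
  refine squeeze_zero' ?_ ?_ hbound <;> filter_upwards [eventually_ge_atTop 0] with t ht
  · exact mul_nonneg (pow_nonneg ht n) (gaussianTail_nonneg t)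
  · calc t ^ n * gaussianTail t ≤ t ^ n * (2 * √π * exp (-(1 / 4) * t ^ 2)) :=
          mul_le_mul_of_nonneg_left (gaussianTail_le ht) (pow_nonneg ht n)
      _ = 2 * √π * (t ^ n * exp (-(1 / 4) * t ^ 2)) := by ring

lemma integral_Ioi_zero_gaussianTail : ∫ t in Ioi 0, gaussianTail t = 1 := by
  have hderiv : ∀ t ∈ Ici (0 : ℝ), HasDerivAt (fun t => t * gaussianTail t - exp (-t ^ 2 / 2))
      (gaussianTail t) t := fun t _ =>
    (((hasDerivAt_id t).mul (hasDerivAt_gaussianTail t)).sub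
      (hasDerivAt_exp_neg_sq_div_two t)).congr_deriv (by simp)
  have hlim : Tendsto (fun t => t * gaussianTail t - exp (-t ^ 2 / 2)) atTop (𝓝 0) := by
    simpa using (tendsto_pow_mul_gaussianTail_atTop 1).sub tendsto_exp_neg_sq_div_two_atTop
  rw [integral_Ioi_of_hasDerivAt_of_nonneg' hderiv (fun t _ => gaussianTail_nonneg t) hlim]
  simp

lemma hasDerivAt_neg_mul_exp_sub_gaussianTail (a l : ℝ) :
    HasDerivAt (fun l => -(l * exp (-(a + l) ^ 2 / 2)) - gaussianTail (a + l))
      (l * (a + l) * exp (-(a + l) ^ 2 / 2)) l := by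
  have hshift : HasDerivAt (fun l : ℝ => a + l) 1 l := (hasDerivAt_id l).const_add a
  have hexp := (hasDerivAt_exp_neg_sq_div_two (a + l)).comp l hshift
  have htail := (hasDerivAt_gaussianTail (a + l)).comp l hshift
  exact (((hasDerivAt_id l).mul hexp).neg.sub htail).congr_deriv (by simp; ring)

lemma tendsto_neg_mul_exp_sub_gaussianTail_atTop {a : ℝ} (ha : 0 ≤ a) :
    Tendsto (fun l => -(l * exp (-(a + l) ^ 2 / 2)) - gaussianTail (a + l)) atTop (𝓝 0) := by
  have hshift : Tendsto (fun l : ℝ => a + l) atTop atTop :=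
    tendsto_atTop_add_const_left _ a tendsto_id
  have hmul : Tendsto (fun l => l * exp (-(a + l) ^ 2 / 2)) atTop (𝓝 0) := by
    refine squeeze_zero' ?_ ?_ (tendsto_mul_exp_neg_sq_div_two_atTop.comp hshift) <;>
      filter_upwards [eventually_ge_atTop 0] with l hl
    · positivity
    · exact mul_le_mul_of_nonneg_right (by linarith) (exp_pos _).le
  simpa using hmul.neg.sub ((tendsto_pow_mul_gaussianTail_atTop 0).comp hshift)

lemma integrableOn_Ioi_mul_add_mul_exp {a : ℝ} (ha : 0 ≤ a) :
    IntegrableOn (fun l => l * (a + l) * exp (-(a + l) ^ 2 / 2)) (Ioi 0) :=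
  integrableOn_Ioi_deriv_of_nonneg' (fun l _ => hasDerivAt_neg_mul_exp_sub_gaussianTail a l)
    (fun l (hl : 0 < l) => by positivity) (tendsto_neg_mul_exp_sub_gaussianTail_atTop ha)

lemma integral_Ioi_mul_add_mul_exp {a : ℝ} (ha : 0 ≤ a) :
    ∫ l in Ioi 0, l * (a + l) * exp (-(a + l) ^ 2 / 2) = gaussianTail a := by
  rw [integral_Ioi_of_hasDerivAt_of_tendsto'
    (fun l _ => hasDerivAt_neg_mul_exp_sub_gaussianTail a l) (integrableOn_Ioi_mul_add_mul_exp ha)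
    (tendsto_neg_mul_exp_sub_gaussianTail_atTop ha)]
  simp

lemma integrable_gaussianTail_two_mul_abs : Integrable fun y : ℝ => gaussianTail (2 * |y|) := by
  refine ((integrable_exp_neg_mul_sq (b := 1) one_pos).const_mul (2 * √π)).mono'
    (continuous_gaussianTail.comp (by fun_prop)).aestronglyMeasurable (.of_forall fun y => ?_)
  rw [norm_of_nonneg (gaussianTail_nonneg _)]
  convert gaussianTail_le (mul_nonneg zero_le_two (abs_nonneg y)) using 3
  rw [mul_pow, sq_abs]
  ring

lemma integral_gaussianTail_two_mul_abs : ∫ y, gaussianTail (2 * |y|) = 1 := by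
  rw [integral_comp_abs (f := fun y => gaussianTail (2 * y)),
    integral_comp_mul_left_Ioi _ _ two_pos,
    mul_zero, integral_Ioi_zero_gaussianTail]
  norm_num

noncomputable def jointLaw : Measure (ℝ × ℝ) :=
  (volume : Measure (ℝ × ℝ)).withDensity
    fun p => ENNReal.ofReal (if 0 ≤ p.2 then jointDensity p.1 p.2 else 0)

lemma measurable_jointDensity : Measurable fun p : ℝ × ℝ => jointDensity p.1 p.2 :=
  Continuous.measurable (by unfold jointDensity; fun_prop)

lemma mul_jointDensity (x l : ℝ) :
    l * jointDensity x l = l * (|x| + l) * exp (-(|x| + l) ^ 2 / 2) / √(2 * π) := by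
  rw [jointDensity]
  ring

lemma lintegral_ofReal_jointDensity_mul (x : ℝ) :
    ∫⁻ l, ENNReal.ofReal (if 0 ≤ l then jointDensity x l else 0) * ENNReal.ofReal l
      = ENNReal.ofReal (gaussianTail |x| / √(2 * π)) := by
  have hind : ∀ l, ENNReal.ofReal (if 0 ≤ l then jointDensity x l else 0) * ENNReal.ofReal l
      = (Ici 0).indicator (fun l => ENNReal.ofReal (l * jointDensity x l)) l := by
    intro l
    by_cases hl : 0 ≤ l
    · have : 0 ≤ jointDensity x l := by unfold jointDensity; positivity
      simp [hl, ← ENNReal.ofReal_mul this, mul_comm]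
    · rw [if_neg hl, indicator_of_notMem (show l ∉ Ici 0 from hl), ENNReal.ofReal_zero, zero_mul]
  have hint : IntegrableOn (fun l => l * jointDensity x l) (Ici 0) := by
    rw [integrableOn_Ici_iff_integrableOn_Ioi]
    simp_rw [mul_jointDensity]
    exact (integrableOn_Ioi_mul_add_mul_exp (abs_nonneg x)).div_const _
  have hnonneg : 0 ≤ᵐ[volume.restrict (Ici 0)] fun l => l * jointDensity x l := by
    filter_upwards [ae_restrict_mem measurableSet_Ici] with l (hl : 0 ≤ l)
    unfold jointDensity
    positivity
  rw [lintegral_congr hind, lintegral_indicator measurableSet_Ici,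
    ← ofReal_integral_eq_lintegral_ofReal hint hnonneg, integral_Ici_eq_integral_Ioi]
  simp_rw [mul_jointDensity]
  rw [integral_div, integral_Ioi_mul_add_mul_exp (abs_nonneg x)]

lemma integral_mul_snd_jointLaw {f : ℝ → ℝ} (hf : Measurable f) (hf0 : 0 ≤ f) :
    ∫ p, f p.1 * p.2 ∂jointLaw = ∫ x, f x * (gaussianTail |x| / √(2 * π)) := by
  have hρ : Measurable fun p : ℝ × ℝ =>
      ENNReal.ofReal (if 0 ≤ p.2 then jointDensity p.1 p.2 else 0) :=
    (Measurable.ite (measurableSet_le measurable_const measurable_snd) measurable_jointDensity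
      measurable_const).ennreal_ofReal
  have hg : Measurable fun p : ℝ × ℝ => f p.1 * p.2 := (hf.comp measurable_fst).mul measurable_snd
  have hnonneg : 0 ≤ᵐ[jointLaw] fun p => f p.1 * p.2 := by
    refine (ae_withDensity_iff hρ).2 (.of_forall fun p hp => mul_nonneg (hf0 _) ?_)
    by_contra hneg
    simp [hneg] at hp
  have hG : Measurable fun x => f x * (gaussianTail |x| / √(2 * π)) :=
    hf.mul ((continuous_gaussianTail.comp continuous_abs).div_const _).measurable
  have hG0 : 0 ≤ fun x => f x * (gaussianTail |x| / √(2 * π)) := fun x =>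
    mul_nonneg (hf0 x) (div_nonneg (gaussianTail_nonneg _) (sqrt_nonneg _))
  rw [integral_eq_lintegral_of_nonneg_ae hnonneg hg.aestronglyMeasurable,
    integral_eq_lintegral_of_nonneg_ae (.of_forall hG0) hG.aestronglyMeasurable, jointLaw,
    lintegral_withDensity_eq_lintegral_mul _ hρ hg.ennreal_ofReal, Measure.volume_eq_prod,
    lintegral_prod _ (hρ.mul hg.ennreal_ofReal).aemeasurable]
  congr 1
  refine lintegral_congr fun x => ?_
  simp only [Pi.mul_apply, ENNReal.ofReal_mul (hf0 x), mul_left_comm _ (ENNReal.ofReal (f x))]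
  rw [lintegral_const_mul' _ _ ENNReal.ofReal_ne_top, lintegral_ofReal_jointDensity_mul]

lemma sqrt_pi_div_two_mul_integral_indicator_half_mul {A : Set ℝ} (hA : MeasurableSet A) :
    √(π / 2) * ∫ x, A.indicator (fun _ => (1 : ℝ)) (x / 2) * (gaussianTail |x| / √(2 * π))
      = ∫ y in A, gaussianTail (2 * |y|) := by
  have hscale := Measure.integral_comp_mul_left
    (fun x => A.indicator (fun _ => (1 : ℝ)) (x / 2) * (gaussianTail |x| / √(2 * π))) 2
  simp only [mul_div_cancel_left₀ _ (two_ne_zero' ℝ), abs_mul, abs_two, abs_inv, smul_eq_mul]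
    at hscale
  have hind : ∀ y, A.indicator (fun _ => (1 : ℝ)) y * (gaussianTail (2 * |y|) / √(2 * π))
      = A.indicator (fun y => gaussianTail (2 * |y|)) y / √(2 * π) := by
    intro y
    by_cases hy : y ∈ A <;> simp [hy]
  have hsqrt : √(2 * π) = 2 * √(π / 2) := by
    rw [show 2 * π = 2 ^ 2 * (π / 2) by ring, sqrt_mul (by positivity), sqrt_sq zero_le_two]
  have hsqrt_pos : 0 < √(2 * π) := sqrt_pos.2 (by positivity)
  calc _ = √(2 * π) * (2⁻¹ * ∫ x, A.indicator (fun _ => (1 : ℝ)) (x / 2) *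
          (gaussianTail |x| / √(2 * π))) := by rw [hsqrt]; ring
    _ = ∫ y in A, gaussianTail (2 * |y|) := by
      rw [← hscale, funext hind, integral_div, integral_indicator hA]
      field_simp

lemma sqrt_pi_div_two_mul_integral_indicator_half_mul_snd_jointLaw {A : Set ℝ}
    (hA : MeasurableSet A) :
    √(π / 2) * ∫ p, A.indicator (fun _ => (1 : ℝ)) (p.1 / 2) * p.2 ∂jointLaw
      = ∫ y in A, gaussianTail (2 * |y|) := by
  rw [integral_mul_snd_jointLaw (f := fun x => A.indicator (fun _ => (1 : ℝ)) (x / 2))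
    ((measurable_const.indicator hA).comp (measurable_id.div_const 2))
    (fun _ => indicator_nonneg (fun _ _ => zero_le_one) _),
    sqrt_pi_div_two_mul_integral_indicator_half_mul hA]

lemma ofReal_setIntegral_gaussianTail_two_mul_abs (A : Set ℝ) :
    ENNReal.ofReal (∫ y in A, gaussianTail (2 * |y|))
      = ∫⁻ y in A, ENNReal.ofReal (gaussianTail (2 * |y|)) :=
  ofReal_integral_eq_lintegral_ofReal integrable_gaussianTail_two_mul_abs.integrableOn
    (.of_forall fun _ => gaussianTail_nonneg _)

theorem law_of_uniformly_sampled_bridge_general {Ω : Type*} [MeasureSpace Ω]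
    (X L : Ω → ℝ) (hX : Measurable X) (hL : Measurable L)
    (hlaw : Measure.map (fun ω => (X ω, L ω)) ℙ
      = (volume : Measure (ℝ × ℝ)).withDensity
          (fun p => ENNReal.ofReal (if 0 ≤ p.2 then jointDensity p.1 p.2 else 0)))
    (μ : Measure ℝ)
    (hμ : ∀ A : Set ℝ, MeasurableSet A →
      μ A = ENNReal.ofReal
        (Real.sqrt (π / 2) * ∫ ω, A.indicator (fun _ => (1 : ℝ)) (X ω / 2) * L ω ∂ℙ)) :
    IsProbabilityMeasure μ ∧
      μ = volume.withDensity
            (fun y => ENNReal.ofReal (∫ z in Set.Ioi (2 * |y|), Real.exp (-z ^ 2 / 2))) := by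
  have hlaw' : Measure.map (fun ω => (X ω, L ω)) ℙ = jointLaw := hlaw
  have hμA : ∀ A, MeasurableSet A → μ A = ∫⁻ y in A, ENNReal.ofReal (gaussianTail (2 * |y|)) := by
    intro A hA
    have hg : Measurable fun p : ℝ × ℝ => A.indicator (fun _ => (1 : ℝ)) (p.1 / 2) * p.2 :=
      ((measurable_const.indicator hA).comp (measurable_fst.div_const 2)).mul measurable_snd
    rw [hμ A hA, ← integral_map (hX.prodMk hL).aemeasurable hg.aestronglyMeasurable, hlaw',
      sqrt_pi_div_two_mul_integral_indicator_half_mul_snd_jointLaw hA,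
      ofReal_setIntegral_gaussianTail_two_mul_abs]
  refine ⟨⟨?_⟩, Measure.ext fun A hA => by rw [hμA A hA, withDensity_apply _ hA]; rfl⟩
  rw [hμA univ .univ, ← ofReal_setIntegral_gaussianTail_two_mul_abs, Measure.restrict_univ,
    integral_gaussianTail_two_mul_abs, ENNReal.ofReal_one]

/-- If `(X, L)` has density `h(x,l)` (supported on `ℝ × [0,∞)`) with respect to Lebesgue measure,
then the measure `μ` on `ℝ` defined by `μ(A) = √(π/2)·E[1_A(X/2)·L]` is a probability measure,
with density `y ↦ ∫_{2|y|}^∞ e^{-z²/2} dz` with respect to Lebesgue measure. (It is the law of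
the Brownian bridge sampled at an independent uniform time.) -/
theorem law_of_uniformly_sampled_bridge {Ω : Type*} [MeasureSpace Ω]
    [IsProbabilityMeasure (ℙ : Measure Ω)]
    (X L : Ω → ℝ) (hX : Measurable X) (hL : Measurable L)
    (hlaw : Measure.map (fun ω => (X ω, L ω)) ℙ
      = (volume : Measure (ℝ × ℝ)).withDensity
          (fun p => ENNReal.ofReal (if 0 ≤ p.2 then jointDensity p.1 p.2 else 0)))
    (μ : Measure ℝ)
    (hμ : ∀ A : Set ℝ, MeasurableSet A →
      μ A = ENNReal.ofReal
        (Real.sqrt (π / 2) * ∫ ω, A.indicator (fun _ => (1 : ℝ)) (X ω / 2) * L ω ∂ℙ)) :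
    IsProbabilityMeasure μ ∧
      μ = volume.withDensity
            (fun y => ENNReal.ofReal (∫ z in Set.Ioi (2 * |y|), Real.exp (-z ^ 2 / 2))) :=
  law_of_uniformly_sampled_bridge_general X L hX hL hlaw μ hμ
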